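/- Equivariance error bound for the regular nonlinearity (main theorem): for every δ with 0 ≤ δ ≤ 1 and every output band limit B' ≥ 1, the total ℓ¹ equivariance error satisfies |z₀^{FT} − z₀^{TF}| + Σ_{m=1}^{B'} ( |z_α^{FT}(m) − z_α^{TF}(m)| + |z_β^{FT}(m) − z_β^{TF}(m)| ) ≤ (4π L_f / N) · ( (2B' + 1/2) · ‖∂x‖₁ + B'(B' + 1) · ‖x‖₁ ). -/

import Mathlib

/-!
The shift by `δ` moves the phase of every harmonic of `x` by `2π m δ / N`, so `x`, and with it
`y = f ∘ x`, changes by at most `(2π L_f / N) ‖∂x‖₁` under the shift, while `|y| ≤ L_f ‖x‖₁`.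
In the `m`-th coefficient the two orders of operation differ in the sample `y(t + δ)` versus `y(t)`
and in the phase of the test function, which moves by `2π m δ / N`; since `cos` and `sin` are
bounded by `1` and `1`-Lipschitz, the coefficient error is at most
`2 (L_f (2π/N) ‖∂x‖₁ + (2π m / N) L_f ‖x‖₁)`. Summing over `m ≤ B'` with `∑ m = B'(B'+1)/2`
gives the bound.
-/

open Finset Real

noncomputable def trigPoly (T : ℝ) (s : Finset ℕ) (x0 : ℝ) (a b : ℕ → ℝ) (t : ℝ) : ℝ :=
  x0 + ∑ m ∈ s, (a m * cos (2 * π * m * t / T) + b m * sin (2 * π * m * t / T))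

theorem abs_mul_cos_add_mul_sin_le (a b θ : ℝ) : |a * cos θ + b * sin θ| ≤ |a| + |b| :=
  calc |a * cos θ + b * sin θ| ≤ |a| * |cos θ| + |b| * |sin θ| := by
        rw [← abs_mul, ← abs_mul]; exact abs_add_le _ _
    _ ≤ |a| * 1 + |b| * 1 := by
        gcongr
        · exact abs_cos_le_one θ
        · exact abs_sin_le_one θ
    _ = |a| + |b| := by ring

theorem abs_mul_cos_add_mul_sin_sub_le (a b θ θ' : ℝ) :
    |(a * cos θ + b * sin θ) - (a * cos θ' + b * sin θ')| ≤ (|a| + |b|) * |θ - θ'| :=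
  calc |(a * cos θ + b * sin θ) - (a * cos θ' + b * sin θ')|
      = |a * (cos θ - cos θ') + b * (sin θ - sin θ')| := by ring_nf
    _ ≤ |a| * |cos θ - cos θ'| + |b| * |sin θ - sin θ'| := by
        rw [← abs_mul, ← abs_mul]; exact abs_add_le _ _
    _ ≤ |a| * |θ - θ'| + |b| * |θ - θ'| := by
        gcongr |a| * ?_ + |b| * ?_
        · exact abs_cos_sub_cos_le θ θ'
        · exact abs_sin_sub_sin_le θ θ'
    _ = (|a| + |b|) * |θ - θ'| := by ring

section trigPoly

variable (T : ℝ) (s : Finset ℕ) (x0 : ℝ) (a b : ℕ → ℝ)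

theorem abs_trigPoly_le (t : ℝ) :
    |trigPoly T s x0 a b t| ≤ |x0| + ∑ m ∈ s, (|a m| + |b m|) := by
  refine (abs_add_le _ _).trans (add_le_add_right ?_ _)
  exact (abs_sum_le_sum_abs _ _).trans (sum_le_sum fun m _ => abs_mul_cos_add_mul_sin_le _ _ _)

theorem abs_trigPoly_sub_le (t t' : ℝ) :
    |trigPoly T s x0 a b t - trigPoly T s x0 a b t'|
      ≤ 2 * π / |T| * (∑ m ∈ s, m * (|a m| + |b m|)) * |t - t'| := by
  have phase (m : ℕ) : |2 * π * m * t / T - 2 * π * m * t' / T| = 2 * π / |T| * m * |t - t'| := by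
    rw [← sub_div, ← mul_sub, abs_div, abs_mul, abs_of_nonneg (by positivity : 0 ≤ 2 * π * m)]
    ring
  calc |trigPoly T s x0 a b t - trigPoly T s x0 a b t'|
      = |∑ m ∈ s, ((a m * cos (2 * π * m * t / T) + b m * sin (2 * π * m * t / T))
          - (a m * cos (2 * π * m * t' / T) + b m * sin (2 * π * m * t' / T)))| := by
        rw [trigPoly, trigPoly, add_sub_add_left_eq_sub, sum_sub_distrib]
    _ ≤ ∑ m ∈ s, (|a m| + |b m|) * (2 * π / |T| * m * |t - t'|) := by
        refine (abs_sum_le_sum_abs _ _).trans (sum_le_sum fun m _ => ?_)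
        rw [← phase]
        exact abs_mul_cos_add_mul_sin_sub_le _ _ _ _
    _ = 2 * π / |T| * (∑ m ∈ s, m * (|a m| + |b m|)) * |t - t'| := by
        rw [mul_sum, sum_mul]
        exact sum_congr rfl fun m _ => by ring

end trigPoly

theorem abs_div_mul_sum_sub_div_mul_sum_le {N : ℕ} (hN : 0 < N) {c K : ℝ} (hc : 0 ≤ c)
    {u v : ℕ → ℝ} (huv : ∀ t ∈ range N, |u t - v t| ≤ K) :
    |c / N * ∑ t ∈ range N, u t - c / N * ∑ t ∈ range N, v t| ≤ c * K := by
  have hN' : (0 : ℝ) < N := Nat.cast_pos.mpr hN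
  calc |c / N * ∑ t ∈ range N, u t - c / N * ∑ t ∈ range N, v t|
      = c / N * |∑ t ∈ range N, (u t - v t)| := by
        rw [← mul_sub, ← sum_sub_distrib, abs_mul, abs_of_nonneg (by positivity)]
    _ ≤ c / N * ∑ _t ∈ range N, K := by
        gcongr
        exact (abs_sum_le_sum_abs _ _).trans (sum_le_sum huv)
    _ = c * K := by
        rw [sum_const, card_range, nsmul_eq_mul]
        field_simp

theorem abs_coeff_shift_sub_coeff_le {g : ℝ → ℝ} (hg : ∀ θ, |g θ| ≤ 1)
    (hg' : ∀ θ θ', |g θ - g θ'| ≤ |θ - θ'|) {y : ℝ → ℝ} {δ M K : ℝ} (hM : ∀ t, |y t| ≤ M)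
    (hK : ∀ t, |y (t + δ) - y t| ≤ K) {N : ℕ} (hN : 0 < N) (m : ℕ) :
    |2 / N * ∑ t ∈ range N, g (2 * π * m * t / N) * y (t + δ)
        - 2 / N * ∑ t ∈ range N, g (2 * π * m * (t - δ) / N) * y t|
      ≤ 2 * (K + 2 * π * m * |δ| / N * M) := by
  refine abs_div_mul_sum_sub_div_mul_sum_le hN zero_le_two fun t _ => ?_
  set θ := 2 * π * m * t / N
  set θ' := 2 * π * m * (t - δ) / N
  have phase : |θ - θ'| = 2 * π * m * |δ| / N := by
    rw [show θ - θ' = 2 * π * m * δ / N by ring, abs_div, abs_mul, Nat.abs_cast,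
      abs_of_nonneg (by positivity : 0 ≤ 2 * π * m)]
  calc |g θ * y (t + δ) - g θ' * y t|
      = |g θ * (y (t + δ) - y t) + (g θ - g θ') * y t| := by ring_nf
    _ ≤ |g θ| * |y (t + δ) - y t| + |g θ - g θ'| * |y t| := by
        rw [← abs_mul, ← abs_mul]; exact abs_add_le _ _
    _ ≤ 1 * K + 2 * π * m * |δ| / N * M := by
        gcongr
        · exact hg θ
        · exact hK t
        · exact phase ▸ hg' θ θ'
        · exact hM t
    _ = K + 2 * π * m * |δ| / N * M := by rw [one_mul]

theorem sum_Icc_one_natCast (n : ℕ) : ∑ m ∈ Icc 1 n, (m : ℝ) = n * (n + 1) / 2 := by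
  induction n with
  | zero => simp
  | succ k ih =>
    rw [sum_Icc_succ_top (Nat.le_add_left 1 k), ih]
    push_cast
    ring

theorem regular_nonlinearity_equivariance_error_bound_general
    (N B : ℕ) (hN : 1 ≤ N)
    (x0 : ℝ) (xa xb : ℕ → ℝ) (x : ℝ → ℝ)
    (hx : ∀ t : ℝ, x t = x0 + ∑ m ∈ Finset.Icc 1 B,
      (xa m * Real.cos (2 * Real.pi * m * t / N)
        + xb m * Real.sin (2 * Real.pi * m * t / N)))
    (f : ℝ → ℝ) (Lf : ℝ) (hLf : 0 ≤ Lf)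
    (hf : ∀ a b : ℝ, |f a - f b| ≤ Lf * |a - b|) (hf0 : f 0 = 0)
    (y : ℝ → ℝ) (hy : ∀ t : ℝ, y t = f (x t)) :
    ∀ (δ : ℝ), 0 ≤ δ → δ ≤ 1 → ∀ B' : ℕ, 1 ≤ B' →
      |(1 / (N : ℝ)) * (∑ t ∈ Finset.range N, y ((t : ℝ) + δ))
          - (1 / (N : ℝ)) * (∑ t ∈ Finset.range N, y (t : ℝ))|
        + ∑ m ∈ Finset.Icc 1 B',
            (|(2 / (N : ℝ)) * (∑ t ∈ Finset.range N,
                  Real.cos (2 * Real.pi * m * t / N) * y ((t : ℝ) + δ))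
              - (2 / (N : ℝ)) * (∑ t ∈ Finset.range N,
                  Real.cos (2 * Real.pi * m * ((t : ℝ) - δ) / N) * y t)|
            + |(2 / (N : ℝ)) * (∑ t ∈ Finset.range N,
                  Real.sin (2 * Real.pi * m * t / N) * y ((t : ℝ) + δ))
              - (2 / (N : ℝ)) * (∑ t ∈ Finset.range N,
                  Real.sin (2 * Real.pi * m * ((t : ℝ) - δ) / N) * y t)|)
      ≤ (4 * Real.pi * Lf / N) *
          (((2 * (B' : ℝ) + 1 / 2) *
              ∑ k ∈ Finset.Icc 1 B, (k : ℝ) * (|xa k| + |xb k|))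
            + (B' : ℝ) * ((B' : ℝ) + 1) *
                (|x0| + ∑ k ∈ Finset.Icc 1 B, (|xa k| + |xb k|))) := by
  intro δ hδ0 hδ1 B' _
  set D := ∑ k ∈ Icc 1 B, (k : ℝ) * (|xa k| + |xb k|)
  set S := |x0| + ∑ k ∈ Icc 1 B, (|xa k| + |xb k|)
  set K := Lf * (2 * π / N * D)
  set M := Lf * S
  have hδ : |δ| ≤ 1 := abs_le.mpr ⟨by linarith, hδ1⟩
  have hxt : x = trigPoly N (Icc 1 B) x0 xa xb := funext hx
  have hyM (t : ℝ) : |y t| ≤ M :=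
    calc |y t| = |f (x t) - f 0| := by rw [hy, hf0, sub_zero]
      _ ≤ Lf * |x t - 0| := hf _ _
      _ ≤ M := by rw [sub_zero, hxt]; exact mul_le_mul_of_nonneg_left (abs_trigPoly_le ..) hLf
  have hyK (t : ℝ) : |y (t + δ) - y t| ≤ K :=
    calc |y (t + δ) - y t| ≤ Lf * |x (t + δ) - x t| := by rw [hy, hy]; exact hf _ _
      _ ≤ K := by
        refine mul_le_mul_of_nonneg_left (hxt ▸ (abs_trigPoly_sub_le ..).trans ?_) hLf
        rw [Nat.abs_cast, add_sub_cancel_left]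
        exact mul_le_of_le_one_right (by positivity) hδ
  have hM : 0 ≤ M := (abs_nonneg _).trans (hyM 0)
  calc _ ≤ 1 * K + ∑ m ∈ Icc 1 B', 4 * (K + 2 * π / N * M * m) := by
        refine add_le_add (abs_div_mul_sum_sub_div_mul_sum_le hN zero_le_one fun t _ => hyK t)
          (sum_le_sum fun m _ => ?_)
        have hcos := abs_coeff_shift_sub_coeff_le abs_cos_le_one abs_cos_sub_cos_le hyM hyK hN m
        have hsin := abs_coeff_shift_sub_coeff_le abs_sin_le_one abs_sin_sub_sin_le hyM hyK hN m
        have hphase : 2 * π * m * |δ| / N * M ≤ 2 * π / N * M * m :=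
          calc 2 * π * m * |δ| / N * M ≤ 2 * π * m * 1 / N * M := by gcongr
            _ = 2 * π / N * M * m := by ring
        linarith
    _ = 4 * π * Lf / N * ((2 * B' + 1 / 2) * D + B' * (B' + 1) * S) := by
        have hN' : (N : ℝ) ≠ 0 := by positivity
        simp only [mul_add, sum_add_distrib, sum_const, Nat.card_Icc, nsmul_eq_mul, ← mul_sum,
          sum_Icc_one_natCast, Nat.add_sub_cancel, K, M]
        field_simp
        ring

/-- total ℓ¹ equivariance error bound for the regular
nonlinearity (main theorem). -/
theorem regular_nonlinearity_equivariance_error_bound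
    (N B : ℕ) (hN : 1 ≤ N) (hB : 1 ≤ B)
    (x0 : ℝ) (xa xb : ℕ → ℝ) (x : ℝ → ℝ)
    (hx : ∀ t : ℝ, x t = x0 + ∑ m ∈ Finset.Icc 1 B,
      (xa m * Real.cos (2 * Real.pi * m * t / N)
        + xb m * Real.sin (2 * Real.pi * m * t / N)))
    (f : ℝ → ℝ) (Lf : ℝ) (hLf : 0 ≤ Lf)
    (hf : ∀ a b : ℝ, |f a - f b| ≤ Lf * |a - b|) (hf0 : f 0 = 0)
    (y : ℝ → ℝ) (hy : ∀ t : ℝ, y t = f (x t)) :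
    ∀ (δ : ℝ), 0 ≤ δ → δ ≤ 1 → ∀ B' : ℕ, 1 ≤ B' →
      |(1 / (N : ℝ)) * (∑ t ∈ Finset.range N, y ((t : ℝ) + δ))
          - (1 / (N : ℝ)) * (∑ t ∈ Finset.range N, y (t : ℝ))|
        + ∑ m ∈ Finset.Icc 1 B',
            (|(2 / (N : ℝ)) * (∑ t ∈ Finset.range N,
                  Real.cos (2 * Real.pi * m * t / N) * y ((t : ℝ) + δ))
              - (2 / (N : ℝ)) * (∑ t ∈ Finset.range N,
                  Real.cos (2 * Real.pi * m * ((t : ℝ) - δ) / N) * y t)|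
            + |(2 / (N : ℝ)) * (∑ t ∈ Finset.range N,
                  Real.sin (2 * Real.pi * m * t / N) * y ((t : ℝ) + δ))
              - (2 / (N : ℝ)) * (∑ t ∈ Finset.range N,
                  Real.sin (2 * Real.pi * m * ((t : ℝ) - δ) / N) * y t)|)
      ≤ (4 * Real.pi * Lf / N) *
          (((2 * (B' : ℝ) + 1 / 2) *
              ∑ k ∈ Finset.Icc 1 B, (k : ℝ) * (|xa k| + |xb k|))
            + (B' : ℝ) * ((B' : ℝ) + 1) *
                (|x0| + ∑ k ∈ Finset.Icc 1 B, (|xa k| + |xb k|))) :=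
  regular_nonlinearity_equivariance_error_bound_general N B hN x0 xa xb x hx f Lf hLf hf hf0 y hy
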